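/- arXiv:1103.4078 — 2 statements merged into one kernel-verified Lean document; each statement's English description precedes it below -/
import Mathlib

section
/- Each of the functions ζ̂_k(τ,θ,φ) = (2 sinh τ + tanh τ / cosh τ) · f_k(θ,φ), for k = 1,2,3 with f₁ = cos θ, f₂ = sin θ cos φ, f₃ = sin θ sin φ, satisfies □ζ̂_k + 3ζ̂_k = 0 on dS₃ and is even under the parity map (τ,θ,φ) ↦ (-τ, π-θ, φ+π). -/
noncomputable section

open Real

/-- Points of the coordinate chart `(τ, θ, φ)` on three-dimensional de Sitter space. -/
abbrev Pt := Fin 3 → ℝ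

/-- Partial derivative along the `i`-th coordinate. -/
def pd (i : Fin 3) (f : Pt → ℝ) (x : Pt) : ℝ :=
  fderiv ℝ f x (Pi.single i 1)

/-- The dS₃ metric `h⁽⁰⁾ = -dτ² + cosh²τ (dθ² + sin²θ dφ²)`. -/
def gmet (x : Pt) (a b : Fin 3) : ℝ :=
  if a = b then
    if a = 0 then -1
    else if a = 1 then (Real.cosh (x 0))^2
    else (Real.cosh (x 0))^2 * (Real.sin (x 1))^2
  else 0

/-- The inverse dS₃ metric `h⁽⁰⁾^{ab}`. -/
def ginv (x : Pt) (a b : Fin 3) : ℝ :=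
  if a = b then
    if a = 0 then -1
    else if a = 1 then ((Real.cosh (x 0))^2)⁻¹
    else ((Real.cosh (x 0))^2 * (Real.sin (x 1))^2)⁻¹
  else 0

/-- Christoffel symbols `Γ^c_{ab}` of the Levi-Civita connection of `gmet`. -/
def chr (x : Pt) (a b c : Fin 3) : ℝ :=
  (1/2) * ∑ d, ginv x c d *
    (pd a (fun y => gmet y d b) x + pd b (fun y => gmet y a d) x
      - pd d (fun y => gmet y a b) x)

/-- Covariant derivative of a covector: `(D t)_{ab} = D_a t_b`. -/
def covD1 (t : Pt → Fin 3 → ℝ) (x : Pt) (a b : Fin 3) : ℝ :=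
  pd a (fun y => t y b) x - ∑ c, chr x a b c * t x c

/-- Covariant derivative of a rank-2 tensor: `(D T)_{abc} = D_a T_{bc}`. -/
def covD2 (T : Pt → Fin 3 → Fin 3 → ℝ) (x : Pt) (a b c : Fin 3) : ℝ :=
  pd a (fun y => T y b c) x - ∑ d, chr x a b d * T x d c - ∑ d, chr x a c d * T x b d

/-- Covariant derivative of a rank-3 tensor: `(D T)_{abcd} = D_a T_{bcd}`. -/
def covD3 (T : Pt → Fin 3 → Fin 3 → Fin 3 → ℝ) (x : Pt) (a b c d : Fin 3) : ℝ :=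
  pd a (fun y => T y b c d) x - ∑ e, chr x a b e * T x e c d
    - ∑ e, chr x a c e * T x b e d - ∑ e, chr x a d e * T x b c e

/-- Hessian `D_a D_b f` of a scalar. -/
def hess (f : Pt → ℝ) (x : Pt) (a b : Fin 3) : ℝ :=
  covD1 (fun y c => pd c f y) x a b

/-- The d'Alembertian `□ f = h⁽⁰⁾^{ab} D_a D_b f` on scalars. -/
def boxS (f : Pt → ℝ) (x : Pt) : ℝ :=
  ∑ a, ∑ b, ginv x a b * hess f x a b

/-- The d'Alembertian `□ = D^c D_c` on covectors. -/
def box1 (t : Pt → Fin 3 → ℝ) (x : Pt) (b : Fin 3) : ℝ :=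
  ∑ a, ∑ c, ginv x a c * covD2 (fun y => covD1 t y) x a c b

/-- The d'Alembertian `□ = D^c D_c` on rank-2 tensors. -/
def box2 (T : Pt → Fin 3 → Fin 3 → ℝ) (x : Pt) (b c : Fin 3) : ℝ :=
  ∑ a, ∑ d, ginv x a d * covD3 (fun y => covD2 T y) x a d b c

/-- The Levi-Civita symbol on three indices. -/
def levi (a b c : Fin 3) : ℝ :=
  ((((b : ℤ) - a) * ((c : ℤ) - b) * ((c : ℤ) - a) : ℤ) : ℝ) / 2

/-- The volume form `ε_{abc}` of dS₃, normalized by `ε_{τθφ} = cosh²τ sin θ`. -/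
def eps (x : Pt) (a b c : Fin 3) : ℝ :=
  (Real.cosh (x 0))^2 * Real.sin (x 1) * levi a b c

/-- The curl `(curl T)_{ab} = ε_a{}^{cd} D_c T_{db}` of a rank-2 tensor. -/
def curl (T : Pt → Fin 3 → Fin 3 → ℝ) (x : Pt) (a b : Fin 3) : ℝ :=
  ∑ c, ∑ d, ∑ e, ∑ f, ginv x c e * ginv x d f * eps x a e f * covD2 T x c d b

/-- The three `l = 1` spherical harmonics `f₁ = cos θ`, `f₂ = sin θ cos φ`, `f₃ = sin θ sin φ`. -/
def sph (k : Fin 3) (x : Pt) : ℝ :=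
  if k = 0 then Real.cos (x 1)
  else if k = 1 then Real.sin (x 1) * Real.cos (x 2)
  else Real.sin (x 1) * Real.sin (x 2)

/-- `ζ̂_k = (2 sinh τ + tanh τ / cosh τ) · f_k`. -/
def zetahatk (k : Fin 3) (x : Pt) : ℝ :=
  (2 * Real.sinh (x 0) + Real.tanh (x 0) / Real.cosh (x 0)) * sph k x

/-- The parity map `(τ, θ, φ) ↦ (-τ, π - θ, φ + π)`. -/
def parity (x : Pt) : Pt := ![-(x 0), Real.pi - x 1, x 2 + Real.pi]

/-!
In the coordinates `(τ, θ, φ)` the dS₃ wave operator separates: on `g(τ) Y(θ, φ)` it acts as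
`(-g'' - 2 tanh τ g') Y + g / cosh² τ · Δ_{S²} Y`. Each `f_k` is an `l = 1` harmonic,
`Δ_{S²} f_k = -2 f_k`, so `□ζ̂_k + 3ζ̂_k = 0` reduces to the radial ODE
`-g'' - 2 tanh τ g' - 2 g / cosh² τ + 3 g = 0` for `g = 2 sinh τ + sinh τ / cosh² τ`, which is
checked directly. Parity evenness holds because `g` is odd and each `f_k` changes sign under
`(θ, φ) ↦ (π - θ, φ + π)`.
-/

lemma pd_separated {F G H : ℝ → ℝ} (hF : Differentiable ℝ F) (hG : Differentiable ℝ G)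
    (hH : Differentiable ℝ H) (i : Fin 3) (x : Pt) :
    pd i (fun y => F (y 0) * G (y 1) * H (y 2)) x =
      ![deriv F (x 0) * G (x 1) * H (x 2), F (x 0) * deriv G (x 1) * H (x 2),
        F (x 0) * G (x 1) * deriv H (x 2)] i := by
  have hcoord (j : Fin 3) (K : ℝ → ℝ) (hK : Differentiable ℝ K) :
      HasFDerivAt (fun y : Pt => K (y j)) (deriv K (x j) • ContinuousLinearMap.proj j) x :=
    (hK (x j)).hasDerivAt.hasFDerivAt.comp x (hasFDerivAt_apply j x) |>.congr_fderiv
      (by ext; simp [mul_comm])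
  rw [pd, (((hcoord 0 F hF).fun_mul (hcoord 1 G hG)).fun_mul (hcoord 2 H hH)).fderiv]
  fin_cases i <;> simp <;> ring

@[simp] lemma pd_const (i : Fin 3) (c : ℝ) (x : Pt) : pd i (fun _ => c) x = 0 := by
  simp [pd]

lemma pd_cosh_sq (i : Fin 3) (x : Pt) :
    pd i (fun y => cosh (y 0) ^ 2) x = ![2 * cosh (x 0) * sinh (x 0), 0, 0] i := by
  have h := pd_separated (F := fun t => cosh t ^ 2) (G := fun _ => 1) (H := fun _ => 1)
    (by fun_prop) (by fun_prop) (by fun_prop) i x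
  fin_cases i <;> simpa [mul_comm] using h

lemma pd_cosh_sq_mul_sin_sq (i : Fin 3) (x : Pt) :
    pd i (fun y => cosh (y 0) ^ 2 * sin (y 1) ^ 2) x =
      ![2 * cosh (x 0) * sinh (x 0) * sin (x 1) ^ 2,
        2 * cosh (x 0) ^ 2 * sin (x 1) * cos (x 1), 0] i := by
  have h := pd_separated (F := fun t => cosh t ^ 2) (G := fun t => sin t ^ 2) (H := fun _ => 1)
    (by fun_prop) (by fun_prop) (by fun_prop) i x
  fin_cases i <;> simp at h ⊢ <;> linear_combination h

lemma chr_zero_zero (x : Pt) (c : Fin 3) : chr x 0 0 c = 0 := by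
  fin_cases c <;> simp [chr, ginv, gmet]

lemma chr_one_one (x : Pt) (c : Fin 3) : chr x 1 1 c = ![sinh (x 0) * cosh (x 0), 0, 0] c := by
  fin_cases c <;> simp [chr, ginv, gmet, pd_cosh_sq]
  ring

lemma chr_two_two (x : Pt) (c : Fin 3) :
    chr x 2 2 c = ![sinh (x 0) * cosh (x 0) * sin (x 1) ^ 2, -(sin (x 1) * cos (x 1)), 0] c := by
  have hcosh := (cosh_pos (x 0)).ne'
  fin_cases c <;> simp [chr, ginv, gmet, pd_cosh_sq_mul_sin_sq] <;> field_simp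

/-- `□^{(S²)}` applied to `G(θ) H(φ)`. -/
def separatedSphLaplacian (G H : ℝ → ℝ) (θ φ : ℝ) : ℝ :=
  deriv (deriv G) θ * H φ + cos θ / sin θ * deriv G θ * H φ + G θ * deriv (deriv H) φ / sin θ ^ 2

lemma boxS_separated {F G H : ℝ → ℝ} (hF : ContDiff ℝ 2 F) (hG : ContDiff ℝ 2 G)
    (hH : ContDiff ℝ 2 H) (x : Pt) (hsin : sin (x 1) ≠ 0) :
    boxS (fun y => F (y 0) * G (y 1) * H (y 2)) x =
      (-deriv (deriv F) (x 0) - 2 * tanh (x 0) * deriv F (x 0)) * G (x 1) * H (x 2)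
        + F (x 0) / cosh (x 0) ^ 2 * separatedSphLaplacian G H (x 1) (x 2) := by
  have hF₁ := hF.differentiable (by norm_num)
  have hG₁ := hG.differentiable (by norm_num)
  have hH₁ := hH.differentiable (by norm_num)
  have hcosh := (cosh_pos (x 0)).ne'
  simp only [boxS, hess, covD1, Fin.sum_univ_three, ginv, pd_separated hF₁ hG₁ hH₁,
    pd_separated hF.differentiable_deriv_two hG₁ hH₁,
    pd_separated hF₁ hG.differentiable_deriv_two hH₁,
    pd_separated hF₁ hG₁ hH.differentiable_deriv_two, chr_zero_zero, chr_one_one, chr_two_two,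
    separatedSphLaplacian, tanh_eq_sinh_div_cosh, ↓reduceIte, Fin.isValue, Fin.reduceEq,
    Matrix.cons_val_zero, Matrix.cons_val_one, Matrix.cons_val]
  field_simp
  ring

def radialProfile (t : ℝ) : ℝ := 2 * sinh t + sinh t / cosh t ^ 2

lemma contDiff_radialProfile : ContDiff ℝ 2 radialProfile := by
  unfold radialProfile
  have hcosh (t : ℝ) := (cosh_pos t).ne'
  fun_prop (disch := simp [hcosh])

lemma deriv_radialProfile :
    deriv radialProfile = fun t => 2 * cosh t + (cosh t ^ 2 - 2 * sinh t ^ 2) / cosh t ^ 3 := by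
  funext t
  have hcosh := (cosh_pos t).ne'
  refine (((hasDerivAt_sinh t).const_mul 2).fun_add ((hasDerivAt_sinh t).fun_div
    ((hasDerivAt_cosh t).fun_pow 2) (pow_ne_zero 2 hcosh))).deriv.trans ?_
  field_simp
  ring

lemma deriv_deriv_radialProfile (t : ℝ) :
    deriv (deriv radialProfile) t =
      2 * sinh t + (6 * sinh t ^ 3 - 5 * sinh t * cosh t ^ 2) / cosh t ^ 4 := by
  have hcosh := (cosh_pos t).ne'
  rw [deriv_radialProfile]
  refine (((hasDerivAt_cosh t).const_mul 2).fun_add ((((hasDerivAt_cosh t).fun_pow 2).fun_sub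
    (((hasDerivAt_sinh t).fun_pow 2).const_mul 2)).fun_div ((hasDerivAt_cosh t).fun_pow 3)
    (pow_ne_zero 3 hcosh))).deriv.trans ?_
  field_simp
  ring

lemma radialProfile_ode (t : ℝ) :
    -deriv (deriv radialProfile) t - 2 * tanh t * deriv radialProfile t
      - 2 * radialProfile t / cosh t ^ 2 + 3 * radialProfile t = 0 := by
  have hcosh := (cosh_pos t).ne'
  rw [deriv_deriv_radialProfile, deriv_radialProfile, radialProfile, tanh_eq_sinh_div_cosh]
  field_simp
  linear_combination (2 * sinh t) * cosh_sq t

def polarFactor (k : Fin 3) : ℝ → ℝ := ![cos, sin, sin] k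

def azimuthalFactor (k : Fin 3) : ℝ → ℝ := ![fun _ => 1, cos, sin] k

lemma contDiff_polarFactor (k : Fin 3) : ContDiff ℝ 2 (polarFactor k) := by
  fin_cases k <;> simp [polarFactor] <;> fun_prop

lemma contDiff_azimuthalFactor (k : Fin 3) : ContDiff ℝ 2 (azimuthalFactor k) := by
  fin_cases k <;> simp [azimuthalFactor] <;> fun_prop

lemma separatedSphLaplacian_polarFactor_azimuthalFactor (k : Fin 3) {θ : ℝ} (hθ : sin θ ≠ 0)
    (φ : ℝ) :
    separatedSphLaplacian (polarFactor k) (azimuthalFactor k) θ φ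
      = -2 * polarFactor k θ * azimuthalFactor k φ := by
  fin_cases k <;> simp [separatedSphLaplacian, polarFactor, azimuthalFactor] <;> field_simp
  · ring
  · linear_combination cos φ * sin_sq_add_cos_sq θ
  · linear_combination sin φ * sin_sq_add_cos_sq θ

lemma zetahatk_eq_separated (k : Fin 3) :
    zetahatk k = fun y => radialProfile (y 0) * polarFactor k (y 1) * azimuthalFactor k (y 2) := by
  funext y
  fin_cases k <;> simp [zetahatk, sph, radialProfile, polarFactor, azimuthalFactor,
    tanh_eq_sinh_div_cosh, div_div, sq] <;> ring

lemma zetahatk_parity (k : Fin 3) (x : Pt) : zetahatk k (parity x) = zetahatk k x := by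
  fin_cases k <;> simp [zetahatk, sph, parity, sin_add, cos_add] <;> ring

/-- Each `ζ̂_k` satisfies `□ζ̂_k + 3ζ̂_k = 0` on dS₃ and is parity even. -/
theorem zetahatk_wave_and_even :
    ∀ k : Fin 3,
      (∀ x : Pt, Real.sin (x 1) ≠ 0 → boxS (zetahatk k) x + 3 * zetahatk k x = 0) ∧
      (∀ x : Pt, zetahatk k (parity x) = zetahatk k x) := by
  intro k
  refine ⟨fun x hsin => ?_, zetahatk_parity k⟩
  rw [zetahatk_eq_separated, boxS_separated contDiff_radialProfile (contDiff_polarFactor k)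
    (contDiff_azimuthalFactor k) x hsin,
    separatedSphLaplacian_polarFactor_azimuthalFactor k hsin]
  linear_combination polarFactor k (x 1) * azimuthalFactor k (x 2) * radialProfile_ode (x 0)
end
end

section
/- On dS₃, the boost and rotational Killing vectors are related by curls: ξ^a_{boost(i)} = -½ ε^{abc} D_b (ξ_{rot(i)})_c and ξ^a_{rot(i)} = ½ ε^{abc} D_b (ξ_{boost(i)})_c, for i = 1 (and similarly i = 2, 3). Verify this for i = 1 with ξ_{rot(1)} = ∂_φ and ξ_{boost(1)} = cos θ ∂_τ - tanh τ sin θ ∂_θ. -/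
/-!
The Levi-Civita connection is torsion free, so contracting `D_b ξ_c` with the antisymmetric
`ε^{abc}` only sees the coordinate curl `∂_b ξ_c - ∂_c ξ_b`; in these coordinates
`ε^{abc} = -[abc] / (cosh²τ sin θ)`. The lowered fields are `ξ_rot = cosh²τ sin²θ dφ` and
`ξ_boost = -cos θ dτ - cosh τ sinh τ sin θ dθ`, whose coordinate curls are
`(2 cosh²τ sin θ cos θ, -2 cosh τ sinh τ sin²θ, 0)` and, by `cosh² - sinh² = 1`,
`(0, 0, -2 cosh²τ sin θ)`; dividing them by `2 cosh²τ sin θ` and `-2 cosh²τ sin θ`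
respectively gives back `ξ_boost` and `ξ_rot`.
-/

noncomputable section

open Real

/-- The fully raised volume form `ε^{abc}`. -/
def epsUp (x : Pt) (a b c : Fin 3) : ℝ :=
  ∑ d, ∑ e, ∑ f, ginv x a d * ginv x b e * ginv x c f * eps x d e f

/-- The rotational Killing vector `ξ_{rot(1)} = ∂_φ` on dS₃. -/
def xrot1 (x : Pt) : Fin 3 → ℝ := ![0, 0, 1]

/-- The boost Killing vector `ξ_{boost(1)} = cos θ ∂_τ - tanh τ sin θ ∂_θ` on dS₃. -/
def xboost1 (x : Pt) : Fin 3 → ℝ :=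
  ![Real.cos (x 1), -Real.tanh (x 0) * Real.sin (x 1), 0]

/-- Lowered `ξ_{rot(1)}`. -/
def xrot1Low (x : Pt) (b : Fin 3) : ℝ := ∑ c, gmet x b c * xrot1 x c

/-- Lowered `ξ_{boost(1)}`. -/
def xboost1Low (x : Pt) (b : Fin 3) : ℝ := ∑ c, gmet x b c * xboost1 x c

theorem Finset.sum_sum_mul_eq_zero_of_antisymm_of_symm {ι R : Type*} [Fintype ι] [CommRing R]
    [NoZeroDivisors R] [CharZero R] {E S : ι → ι → R} (hE : ∀ i j, E i j = -E j i)
    (hS : ∀ i j, S i j = S j i) : ∑ i, ∑ j, E i j * S i j = 0 := by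
  refine CharZero.eq_neg_self_iff.mp ?_
  calc ∑ i, ∑ j, E i j * S i j = ∑ j, ∑ i, E i j * S i j := Finset.sum_comm
    _ = ∑ j, ∑ i, -(E j i * S j i) :=
      Finset.sum_congr rfl fun j _ => Finset.sum_congr rfl fun i _ => by rw [hE, hS, neg_mul]
    _ = -∑ i, ∑ j, E i j * S i j := by simp only [Finset.sum_neg_distrib]

lemma gmet_comm (y : Pt) (a b : Fin 3) : gmet y a b = gmet y b a := by
  by_cases h : a = b
  · rw [h]
  · simp [gmet, h, Ne.symm h]

lemma chr_comm (x : Pt) (a b c : Fin 3) : chr x a b c = chr x b a c := by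
  have gmet_fun_comm (i j : Fin 3) : (fun y => gmet y i j) = fun y => gmet y j i :=
    funext fun y => gmet_comm y i j
  unfold chr
  congr 1
  refine Finset.sum_congr rfl fun d _ => ?_
  rw [gmet_fun_comm d b, gmet_fun_comm a d, gmet_fun_comm a b]
  ring

lemma sum_antisymm_mul_covD1 {E : Fin 3 → Fin 3 → ℝ} (hE : ∀ b c, E b c = -E c b)
    (t : Pt → Fin 3 → ℝ) (x : Pt) :
    ∑ b, ∑ c, E b c * covD1 t x b c = ∑ b, ∑ c, E b c * pd b (fun y => t y c) x := by
  have hchr : ∑ b, ∑ c, E b c * ∑ d, chr x b c d * t x d = 0 :=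
    Finset.sum_sum_mul_eq_zero_of_antisymm_of_symm hE fun b c => by simp only [chr_comm x b c]
  simp only [covD1, mul_sub, Finset.sum_sub_distrib, hchr, sub_zero]

lemma levi_swap (a b c : Fin 3) : levi a b c = -levi a c b := by
  simp only [levi]; push_cast; ring

lemma sum_ginv_mul (x : Pt) (a : Fin 3) (F : Fin 3 → ℝ) :
    ∑ d, ginv x a d * F d = ginv x a a * F a :=
  Finset.sum_eq_single a (fun d _ hd => by simp [ginv, Ne.symm hd]) (by simp)

lemma epsUp_eq (x : Pt) (hs : Real.sin (x 1) ≠ 0) (a b c : Fin 3) :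
    epsUp x a b c = -levi a b c / (Real.cosh (x 0) ^ 2 * Real.sin (x 1)) := by
  have hdiag : epsUp x a b c = ginv x a a * ginv x b b * ginv x c c * eps x a b c := by
    simp only [epsUp, mul_assoc, ← Finset.mul_sum, sum_ginv_mul]
  have hc : Real.cosh (x 0) ≠ 0 := (Real.cosh_pos _).ne'
  rw [hdiag]
  fin_cases a <;> fin_cases b <;> fin_cases c <;> simp [ginv, eps, levi] <;> field_simp

section PartialDerivatives

variable {u v : ℝ → ℝ} {u' v' : ℝ} {x : Pt} {j k : Fin 3}

lemma hasFDerivAt_comp_apply (hu : HasDerivAt u u' (x j)) :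
    HasFDerivAt (fun y : Pt => u (y j)) (u' • ContinuousLinearMap.proj (R := ℝ) j) x :=
  hu.comp_hasFDerivAt x (ContinuousLinearMap.proj (R := ℝ) (φ := fun _ : Fin 3 => ℝ) j).hasFDerivAt

lemma pd_comp_apply (hu : HasDerivAt u u' (x j)) (i : Fin 3) :
    pd i (fun y => u (y j)) x = if i = j then u' else 0 := by
  rw [pd, (hasFDerivAt_comp_apply hu).fderiv]
  by_cases h : i = j
  · subst h; simp
  · simp [h, Ne.symm h]

lemma pd_comp_mul_comp (hu : HasDerivAt u u' (x j)) (hv : HasDerivAt v v' (x k)) (i : Fin 3) :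
    pd i (fun y => u (y j) * v (y k)) x
      = (if i = j then u' * v (x k) else 0) + (if i = k then u (x j) * v' else 0) := by
  rw [pd, ((hasFDerivAt_comp_apply hu).fun_mul (hasFDerivAt_comp_apply hv)).fderiv]
  simp only [add_apply, smul_apply, ContinuousLinearMap.proj_apply, Pi.single_apply, smul_eq_mul]
  simp only [@eq_comm _ k i, @eq_comm _ j i]
  split_ifs <;> ring

end PartialDerivatives

lemma xrot1Low_eq (x : Pt) :
    xrot1Low x = ![0, 0, Real.cosh (x 0) ^ 2 * Real.sin (x 1) ^ 2] := by
  funext b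
  fin_cases b <;> simp [xrot1Low, xrot1, gmet]

lemma xboost1Low_eq (x : Pt) :
    xboost1Low x = ![-Real.cos (x 1), -(Real.cosh (x 0) * Real.sinh (x 0)) * Real.sin (x 1), 0] := by
  have hc : Real.cosh (x 0) ≠ 0 := (Real.cosh_pos _).ne'
  funext b
  fin_cases b <;> simp [xboost1Low, xboost1, gmet, Real.tanh_eq_sinh_div_cosh]
  field_simp

def coordCurl (t : Pt → Fin 3 → ℝ) (x : Pt) (a : Fin 3) : ℝ :=
  ∑ b, ∑ c, levi a b c * pd b (fun y => t y c) x

lemma coordCurl_xrot1Low (x : Pt) :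
    coordCurl xrot1Low x = ![2 * Real.cosh (x 0) ^ 2 * Real.sin (x 1) * Real.cos (x 1),
      -(2 * Real.cosh (x 0) * Real.sinh (x 0) * Real.sin (x 1) ^ 2), 0] := by
  have hu : HasDerivAt (fun t => Real.cosh t ^ 2) (2 * Real.cosh (x 0) * Real.sinh (x 0)) (x 0) :=
    ((Real.hasDerivAt_cosh (x 0)).fun_pow 2).congr_deriv (by simp)
  have hv : HasDerivAt (fun t => Real.sin t ^ 2) (2 * Real.sin (x 1) * Real.cos (x 1)) (x 1) :=
    ((Real.hasDerivAt_sin (x 1)).fun_pow 2).congr_deriv (by simp)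
  have hpd := pd_comp_mul_comp hu hv
  funext a
  fin_cases a <;> simp [coordCurl, xrot1Low_eq, Fin.sum_univ_three, hpd] <;> norm_num [levi]
  ring

lemma coordCurl_xboost1Low (x : Pt) :
    coordCurl xboost1Low x = ![0, 0, -(2 * Real.cosh (x 0) ^ 2 * Real.sin (x 1))] := by
  have hpd0 := pd_comp_apply (u := fun t => -Real.cos t) (Real.hasDerivAt_cos (x 1)).neg
  have hpd1 := pd_comp_mul_comp (u := fun t => -(Real.cosh t * Real.sinh t))
    ((Real.hasDerivAt_cosh (x 0)).mul (Real.hasDerivAt_sinh (x 0))).neg (Real.hasDerivAt_sin (x 1))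
  funext a
  fin_cases a <;>
    simp only [coordCurl, xboost1Low_eq, Fin.sum_univ_three, Matrix.cons_val, hpd0, hpd1, pd_const] <;>
    norm_num [levi, Fin.ext_iff]
  linear_combination Real.sin (x 1) * Real.cosh_sq (x 0)

lemma sum_epsUp_mul_covD1 (x : Pt) (hs : Real.sin (x 1) ≠ 0) (t : Pt → Fin 3 → ℝ) (a : Fin 3) :
    ∑ b, ∑ c, epsUp x a b c * covD1 t x b c
      = -coordCurl t x a / (Real.cosh (x 0) ^ 2 * Real.sin (x 1)) := by
  rw [sum_antisymm_mul_covD1 (fun b c => by simp only [epsUp_eq x hs, levi_swap a b c]; ring)]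
  simp only [epsUp_eq x hs, coordCurl, neg_div, Finset.sum_div, div_mul_eq_mul_div, neg_mul,
    Finset.sum_neg_distrib]

/-- On dS₃, `ξ^a_{boost(1)} = -½ ε^{abc} D_b (ξ_{rot(1)})_c` and
`ξ^a_{rot(1)} = ½ ε^{abc} D_b (ξ_{boost(1)})_c`. -/
theorem boost_rot_curl_duality :
    ∀ x : Pt, Real.sin (x 1) ≠ 0 → ∀ a : Fin 3,
      (xboost1 x a
        = -(1/2) * ∑ b, ∑ c, epsUp x a b c * covD1 xrot1Low x b c) ∧
      (xrot1 x a
        = (1/2) * ∑ b, ∑ c, epsUp x a b c * covD1 xboost1Low x b c) := by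
  intro x hs a
  have hc : Real.cosh (x 0) ≠ 0 := (Real.cosh_pos _).ne'
  simp only [sum_epsUp_mul_covD1 x hs, coordCurl_xrot1Low, coordCurl_xboost1Low]
  fin_cases a <;> simp [xboost1, xrot1, Real.tanh_eq_sinh_div_cosh] <;> field_simp
end
end
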